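/- arXiv:2506.13088 — 2 statements merged into one kernel-verified Lean document; each statement's English description precedes it below -/
import Mathlib

section
/- Let (V^{(0)}, m^{(0)}) be the solution of the HJB–Kolmogorov system with ε = 0, set ρ := √(r² + r) − r, and define λ^{(0)}_k(t) := ½(1 − ΔV^{(0)}_k(t)). Then for every k ∈ {1,…,K} and every t ∈ [0,T]: ρ ≤ λ^{(0)}_k(t) ≤ ½; in particular λ^{(0)}_k is bounded below away from 0 uniformly in k and t. -/
noncomputable section

/-- The proportion of active firms: `η(t) = ∑_{k=1}^K m_k(t)`. -/
def marketEta (K : ℕ) (m : ℕ → ℝ → ℝ) (t : ℝ) : ℝ := ∑ k ∈ Finset.Icc 1 K, m k t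

/-- The interaction functional
`φ(t) = (∑_{k=1}^K m_k(t)·ΔV_k(t) − η(t)) / (2 + ε·η(t))`, where `ΔV_k = V_k − V_{k−1}`. -/
def marketPhi (K : ℕ) (ε : ℝ) (V m : ℕ → ℝ → ℝ) (t : ℝ) : ℝ :=
  ((∑ k ∈ Finset.Icc 1 K, m k t * (V k t - V (k - 1) t)) - marketEta K m t) /
    (2 + ε * marketEta K m t)

/-- The equilibrium sale intensity `G_k(t) = ½(1 − ΔV_k(t) + ε·φ(t))`. -/
def marketLam (K : ℕ) (ε : ℝ) (V m : ℕ → ℝ → ℝ) (k : ℕ) (t : ℝ) : ℝ :=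
  (1 / 2) * (1 - (V k t - V (k - 1) t) + ε * marketPhi K ε V m t)

/-- `(V, m)` is a solution of the HJB–Kolmogorov system on `[0, T]` with data `K, r, ε, M`:
`V_1, …, V_K` and `m_0, …, m_K` are continuously differentiable on `[0, T]`, `V_0 ≡ 0`,
the HJB equations `V_k' − r V_k + ¼(1 − ΔV_k + ε φ)² = 0` hold for `k = 1, …, K`,
the Kolmogorov equations hold, `V_k(T) = 0`, and `m_k(0) = M_k`. -/
def IsHJBKolSolution (K : ℕ) (T r ε : ℝ) (M : ℕ → ℝ) (V m : ℕ → ℝ → ℝ) : Prop :=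
  (∀ t : ℝ, V 0 t = 0) ∧
  (∀ k, 1 ≤ k → k ≤ K → ContDiffOn ℝ 1 (V k) (Set.Icc 0 T)) ∧
  (∀ k, k ≤ K → ContDiffOn ℝ 1 (m k) (Set.Icc 0 T)) ∧
  (∀ k, 1 ≤ k → k ≤ K → ∀ t ∈ Set.Icc (0 : ℝ) T,
    derivWithin (V k) (Set.Icc 0 T) t - r * V k t +
      (1 / 4) * (1 - (V k t - V (k - 1) t) + ε * marketPhi K ε V m t) ^ 2 = 0) ∧
  (∀ t ∈ Set.Icc (0 : ℝ) T,
    derivWithin (m 0) (Set.Icc 0 T) t = marketLam K ε V m 1 t * m 1 t) ∧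
  (∀ k, 1 ≤ k → k ≤ K - 1 → ∀ t ∈ Set.Icc (0 : ℝ) T,
    derivWithin (m k) (Set.Icc 0 T) t =
      marketLam K ε V m (k + 1) t * m (k + 1) t - marketLam K ε V m k t * m k t) ∧
  (∀ t ∈ Set.Icc (0 : ℝ) T,
    derivWithin (m K) (Set.Icc 0 T) t = -(marketLam K ε V m K t) * m K t) ∧
  (∀ k, 1 ≤ k → k ≤ K → V k T = 0) ∧
  (∀ k, k ≤ K → m k 0 = M k)

open Set

/-! With `ε = 0` the HJB equations form a triangular system: the increment `w = ΔV_k` solves the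
Riccati equation `w' = r w - ¼(1 - w)² + ¼(1 - ΔV_{k-1})²` backwards from `w(T) = 0` (without
the last term for `k = 1`). Once `0 ≤ ΔV_{k-1} ≤ 2`, the forcing lies in `[0, ¼]`, and then `0`
and the root `β = 1 - 2ρ` of `r β = ¼(1 - β)²` are barriers: `-w` and `w - β` satisfy linear
equations `u' = p u + q` with `q ≥ 0` and `u(T) ≤ 0`, and the integrating factor `e^{-∫p}` makes
`u e^{-∫p}` monotone, so `u ≤ 0`. By induction on `k`, `0 ≤ ΔV_k ≤ 1 - 2ρ`, i.e.
`ρ ≤ λ_k ≤ ½`. -/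

theorem ContinuousOn.exists_forall_mem_Icc_hasDerivAt {p : ℝ → ℝ} {a b : ℝ} (hab : a ≤ b)
    (hp : ContinuousOn p (Icc a b)) : ∃ P : ℝ → ℝ, ∀ x ∈ Icc a b, HasDerivAt P (p x) x := by
  have hcont : Continuous (IccExtend hab ((Icc a b).domRestrict p)) :=
    (continuousOn_iff_continuous_domRestrict.1 hp).Icc_extend'
  refine ⟨fun x => ∫ y in a..x, IccExtend hab ((Icc a b).domRestrict p) y, fun x hx => ?_⟩
  have := (hcont.integral_hasStrictDerivAt a x).hasDerivAt
  rwa [IccExtend_of_mem _ _ hx] at this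

theorem nonpos_of_hasDerivWithinAt_mul_add {u p q : ℝ → ℝ} {a b : ℝ}
    (hu : ∀ t ∈ Icc a b, HasDerivWithinAt u (p t * u t + q t) (Icc a b) t)
    (hp : ContinuousOn p (Icc a b)) (hq : ∀ t ∈ Icc a b, 0 ≤ q t) (hub : u b ≤ 0) :
    ∀ t ∈ Icc a b, u t ≤ 0 := by
  intro t ht
  have hab : a ≤ b := ht.1.trans ht.2
  obtain ⟨P, hP⟩ := hp.exists_forall_mem_Icc_hasDerivAt hab
  set v : ℝ → ℝ := fun x => u x * Real.exp (-P x)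
  have hv : ∀ x ∈ Icc a b, HasDerivWithinAt v (q x * Real.exp (-P x)) (Icc a b) x := by
    intro x hx
    refine ((hu x hx).mul (hP x hx).neg.exp.hasDerivWithinAt).congr_deriv ?_
    simp only [Pi.neg_apply]
    ring
  have hmono : MonotoneOn v (Icc a b) := by
    refine monotoneOn_of_hasDerivWithinAt_nonneg (f' := fun x => q x * Real.exp (-P x))
      (convex_Icc a b) (fun x hx => (hv x hx).continuousWithinAt) (fun x hx => ?_) (fun x hx => ?_)
    · rw [interior_Icc] at hx ⊢
      exact (hv x (Ioo_subset_Icc_self hx)).mono Ioo_subset_Icc_self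
    · rw [interior_Icc] at hx
      exact mul_nonneg (hq x (Ioo_subset_Icc_self hx)) (Real.exp_pos _).le
  have hvt : v t ≤ 0 :=
    (hmono ht ⟨hab, le_rfl⟩ ht.2).trans (mul_nonpos_of_nonpos_of_nonneg hub (Real.exp_pos _).le)
  exact nonpos_of_mul_nonpos_left hvt (Real.exp_pos _)

section Riccati

variable {w c : ℝ → ℝ} {a b r : ℝ}

theorem riccati_nonneg
    (hw : ∀ t ∈ Icc a b, HasDerivWithinAt w (r * w t - (1 - w t) ^ 2 / 4 + c t) (Icc a b) t)
    (hc : ∀ t ∈ Icc a b, c t ≤ 1 / 4) (hwb : 0 ≤ w b) : ∀ t ∈ Icc a b, 0 ≤ w t := by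
  have hwc : ContinuousOn w (Icc a b) := fun t ht => (hw t ht).continuousWithinAt
  have key := nonpos_of_hasDerivWithinAt_mul_add (u := fun t => -w t)
    (p := fun t => r + (2 - w t) / 4) (q := fun t => 1 / 4 - c t)
    (fun t ht => (hw t ht).neg.congr_deriv (by ring)) (by fun_prop)
    (fun t ht => by linarith [hc t ht]) (by linarith)
  exact fun t ht => neg_nonpos.1 (key t ht)

theorem riccati_le_of_root {β : ℝ} (hβ : r * β = (1 - β) ^ 2 / 4)
    (hw : ∀ t ∈ Icc a b, HasDerivWithinAt w (r * w t - (1 - w t) ^ 2 / 4 + c t) (Icc a b) t)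
    (hc : ∀ t ∈ Icc a b, 0 ≤ c t) (hwb : w b ≤ β) : ∀ t ∈ Icc a b, w t ≤ β := by
  have hwc : ContinuousOn w (Icc a b) := fun t ht => (hw t ht).continuousWithinAt
  -- since `β` is a stationary point, `w - β` solves `u' = (r + (2 - w - β) / 4) u + c`
  have key := nonpos_of_hasDerivWithinAt_mul_add (u := fun t => w t - β)
    (p := fun t => r + (2 - w t - β) / 4) (q := c)
    (fun t ht => ((hw t ht).sub_const β).congr_deriv (by linear_combination hβ)) (by fun_prop)
    hc (by linarith)
  exact fun t ht => sub_nonpos.1 (key t ht)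

end Riccati

section HJBKolmogorov

variable {K : ℕ} {T r : ℝ} {M : ℕ → ℝ} {V m : ℕ → ℝ → ℝ}

theorem marketLam_zero (k : ℕ) (t : ℝ) :
    marketLam K 0 V m k t = (1 - (V k t - V (k - 1) t)) / 2 := by
  simp only [marketLam, zero_mul, add_zero]
  ring

theorem IsHJBKolSolution.hasDerivWithinAt_hjb (hsol : IsHJBKolSolution K T r 0 M V m)
    {k : ℕ} (hk1 : 1 ≤ k) (hkK : k ≤ K) :
    ∀ t ∈ Icc 0 T, HasDerivWithinAt (V k)
      (r * V k t - (1 - (V k t - V (k - 1) t)) ^ 2 / 4) (Icc 0 T) t := by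
  obtain ⟨-, hV, -, hHJB, -⟩ := hsol
  intro t ht
  have hderiv := ((hV k hk1 hkK).differentiableOn one_ne_zero t ht).hasDerivWithinAt
  have hHJB := hHJB k hk1 hkK t ht
  rw [zero_mul, add_zero] at hHJB
  rwa [show derivWithin (V k) (Icc 0 T) t = r * V k t - (1 - (V k t - V (k - 1) t)) ^ 2 / 4 by
    linarith] at hderiv

theorem IsHJBKolSolution.increment_mem_Icc (hsol : IsHJBKolSolution K T r 0 M V m) {β : ℝ}
    (hβ : r * β = (1 - β) ^ 2 / 4) (hβ0 : 0 ≤ β) (hβ2 : β ≤ 2) :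
    ∀ k ≤ K, ∀ t ∈ Icc 0 T, V k t - V (k - 1) t ∈ Icc 0 β := by
  obtain ⟨hV0, -, -, -, -, -, -, hVT, -⟩ := id hsol
  intro k
  induction k with
  | zero =>
    -- `0 - 1 = 0` in `ℕ`, so `ΔV_0 = V_0 - V_0 = 0`
    intro _ t _
    simpa using hβ0
  | succ k ih =>
    intro hk
    obtain ⟨c, hc, hw, hwT⟩ : ∃ c : ℝ → ℝ, (∀ t ∈ Icc 0 T, c t ∈ Icc 0 (1 / 4)) ∧
        (∀ t ∈ Icc 0 T, HasDerivWithinAt (fun t => V (k + 1) t - V k t)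
          (r * (V (k + 1) t - V k t) - (1 - (V (k + 1) t - V k t)) ^ 2 / 4 + c t) (Icc 0 T) t) ∧
        V (k + 1) T - V k T = 0 := by
      rcases Nat.eq_zero_or_pos k with rfl | hk0
      · refine ⟨0, fun _ _ => by norm_num, fun t ht => ?_, by simp [hV0, hVT 1 le_rfl hk]⟩
        simpa [hV0] using hsol.hasDerivWithinAt_hjb le_rfl hk t ht
      · refine ⟨fun t => (1 - (V k t - V (k - 1) t)) ^ 2 / 4, fun t ht => ?_, fun t ht => ?_,
          by rw [hVT (k + 1) (by omega) hk, hVT k hk0 (by omega), sub_zero]⟩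
        · obtain ⟨h0, hβ'⟩ := ih (by omega) t ht
          constructor <;> nlinarith
        · have hsucc := hsol.hasDerivWithinAt_hjb (k := k + 1) (by omega) hk t ht
          have hprev := hsol.hasDerivWithinAt_hjb hk0 (by omega) t ht
          rw [Nat.add_sub_cancel] at hsucc
          exact (hsucc.sub hprev).congr_deriv (by ring)
    intro t ht
    rw [Nat.add_sub_cancel]
    exact ⟨riccati_nonneg hw (fun t ht => (hc t ht).2) hwT.ge t ht,
      riccati_le_of_root hβ hw (fun t ht => (hc t ht).1) (hwT.trans_le hβ0) t ht⟩

end HJBKolmogorov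

theorem lambda_bounds_of_no_interaction_general
    (K : ℕ) (T r : ℝ) (hr : 0 < r)
    (M : ℕ → ℝ)
    (V m : ℕ → ℝ → ℝ) (hsol : IsHJBKolSolution K T r 0 M V m) :
    (∀ k, 1 ≤ k → k ≤ K → ∀ t ∈ Set.Icc (0 : ℝ) T,
      Real.sqrt (r ^ 2 + r) - r ≤ marketLam K 0 V m k t ∧ marketLam K 0 V m k t ≤ 1 / 2) ∧
    0 < Real.sqrt (r ^ 2 + r) - r := by
  set ρ := Real.sqrt (r ^ 2 + r) - r with hρ
  have hsq : Real.sqrt (r ^ 2 + r) ^ 2 = r ^ 2 + r := Real.sq_sqrt (by positivity)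
  have hsqrt_nonneg := Real.sqrt_nonneg (r ^ 2 + r)
  have hρ_pos : 0 < ρ := by nlinarith
  have hρ_le : ρ ≤ 1 / 2 := by nlinarith
  have hroot : r * (1 - 2 * ρ) = (1 - (1 - 2 * ρ)) ^ 2 / 4 := by nlinarith
  refine ⟨fun k _ hkK t ht => ?_, hρ_pos⟩
  obtain ⟨h0, hβ⟩ := hsol.increment_mem_Icc hroot (by linarith) (by linarith) k hkK t ht
  rw [marketLam_zero]
  constructor <;> linarith

/-- For the solution of the `ε = 0` system, the intensities `λ_k⁰(t) = ½(1 − ΔV_k⁰(t))`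
satisfy `ρ ≤ λ_k⁰(t) ≤ ½` on `[0, T]`, where `ρ = √(r² + r) − r > 0`; in particular they are
bounded below away from `0` uniformly in `k` and `t`. -/
theorem lambda_bounds_of_no_interaction
    (K : ℕ) (hK : 1 ≤ K) (T r : ℝ) (hT : 0 < T) (hr : 0 < r)
    (M : ℕ → ℝ) (hM : ∀ k, k ≤ K → 0 ≤ M k)
    (hMsum : ∑ k ∈ Finset.Icc 0 K, M k = 1)
    (V m : ℕ → ℝ → ℝ) (hsol : IsHJBKolSolution K T r 0 M V m) :
    (∀ k, 1 ≤ k → k ≤ K → ∀ t ∈ Set.Icc (0 : ℝ) T,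
      Real.sqrt (r ^ 2 + r) - r ≤ marketLam K 0 V m k t ∧ marketLam K 0 V m k t ≤ 1 / 2) ∧
    0 < Real.sqrt (r ^ 2 + r) - r :=
  lambda_bounds_of_no_interaction_general K T r hr M V m hsol
end
end

section
/- Let (V^{[1]}, m^{[1]}) and (V^{[2]}, m^{[2]}) be two solutions of the HJB–Kolmogorov system with the same data K, T, r, ε, M. For i = 1, 2 and k = 1,…,K define G^{[i]}_k := ½(1 − ΔV^{[i]}_k + ε·φ^{[i]}) and H^{[i]}_k := (G^{[i]}_k)², where φ^{[i]} := (Σ_{j=1}^K m^{[i]}_j·ΔV^{[i]}_j − η^{[i]})/(2 + ε·η^{[i]}) and η^{[i]} := Σ_{j=1}^K m^{[i]}_j; set G^{[i]}_{K+1} := 0, and write δL := L^{[2]} − L^{[1]} for any quantity L. Then the energy identity ∫₀ᵀ e^{−rt} Σ_{k=1}^K [ δm_k(t)·δH_k(t) + δ(ΔV_k)(t)·δ(G_k·m_k)(t) ] dt = 0 holds. -/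
noncomputable section

/-!
Differentiate `F(t) = e^{-rt} ∑_k δV_k δm_k`. The HJB equations give `δV_k' = r δV_k − δH_k`,
the Kolmogorov equations give `δm_k' = δQ_{k+1} − δQ_k` with `Q_k = G_k m_k` and `Q_{K+1} = 0`,
and summation by parts (using `δV_0 = 0`) turns `F'` into minus the integrand. Since
`δV_k(T) = 0` and `δm_k(0) = 0`, `F` vanishes at both ends, so the integral is `F(0) − F(T) = 0`.
-/

open Finset

theorem Finset.sum_Icc_mul_sub_eq_neg_sum_sub_mul {w q : ℕ → ℝ} (hw : w 0 = 0) {K : ℕ}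
    (hq : q (K + 1) = 0) :
    ∑ k ∈ Icc 1 K, w k * (q (k + 1) - q k) = -∑ k ∈ Icc 1 K, (w k - w (k - 1)) * q k := by
  have telescope : ∀ n, ∑ k ∈ Icc 1 n, (w k * (q (k + 1) - q k) + (w k - w (k - 1)) * q k)
      = w n * q (n + 1) := by
    intro n
    induction n with
    | zero => simp [hw]
    | succ n ih =>
      rw [sum_Icc_succ_top (by omega), ih, Nat.add_sub_cancel]
      ring
  rw [eq_neg_iff_add_eq_zero, ← sum_add_distrib, telescope, hq, mul_zero]

theorem DifferentiableOn.hasDerivAt_derivWithin_Icc {f : ℝ → ℝ} {a b t : ℝ}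
    (hf : DifferentiableOn ℝ f (Set.Icc a b)) (ht : t ∈ Set.Ioo a b) :
    HasDerivAt f (derivWithin f (Set.Icc a b) t) t :=
  (hf t (Set.Ioo_subset_Icc_self ht)).hasDerivWithinAt.hasDerivAt (Icc_mem_nhds ht.1 ht.2)

theorem hasDerivAt_exp_mul_sum_mul {ι : Type*} {s : Finset ι} {a b : ι → ℝ → ℝ}
    {a' b' : ι → ℝ} {r t : ℝ} (ha : ∀ i ∈ s, HasDerivAt (a i) (a' i) t)
    (hb : ∀ i ∈ s, HasDerivAt (b i) (b' i) t) :
    HasDerivAt (fun u => Real.exp (-(r * u)) * ∑ i ∈ s, a i u * b i u)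
      (Real.exp (-(r * t)) *
        (∑ i ∈ s, (a' i * b i t + a i t * b' i) - r * ∑ i ∈ s, a i t * b i t)) t := by
  have hexp : HasDerivAt (fun u => Real.exp (-(r * u))) (Real.exp (-(r * t)) * -r) t := by
    simpa using ((hasDerivAt_id t).const_mul r).neg.exp
  exact (hexp.mul (HasDerivAt.fun_sum fun i hi => (ha i hi).fun_mul (hb i hi))).congr_deriv
    (by ring)

/-- `v, m, H, Q` stand for `δV, δm, δH, δ(G m)` at a fixed time and `dv, dm` for the
derivatives of `v, m`. -/
theorem sum_pairing_deriv_eq_neg_energy (K : ℕ) (r : ℝ) {v m H Q dv dm : ℕ → ℝ}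
    (hv : v 0 = 0) (hQ : Q (K + 1) = 0) (hdv : ∀ k ∈ Icc 1 K, dv k = r * v k - H k)
    (hdm : ∀ k ∈ Icc 1 K, dm k = Q (k + 1) - Q k) :
    ∑ k ∈ Icc 1 K, (dv k * m k + v k * dm k) - r * ∑ k ∈ Icc 1 K, v k * m k
      = -∑ k ∈ Icc 1 K, (m k * H k + (v k - v (k - 1)) * Q k) := by
  have hdvm : ∑ k ∈ Icc 1 K, dv k * m k
      = r * ∑ k ∈ Icc 1 K, v k * m k - ∑ k ∈ Icc 1 K, m k * H k := by
    rw [mul_sum, ← sum_sub_distrib]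
    exact sum_congr rfl fun k hk => by rw [hdv k hk]; ring
  have hvdm : ∑ k ∈ Icc 1 K, v k * dm k = -∑ k ∈ Icc 1 K, (v k - v (k - 1)) * Q k := by
    rw [← sum_Icc_mul_sub_eq_neg_sum_sub_mul hv hQ]
    exact sum_congr rfl fun k hk => by rw [hdm k hk]
  rw [sum_add_distrib, hdvm, hvdm, sum_add_distrib]
  ring

/-- `G_k m_k`, with the convention `G_{K+1} = 0`. -/
def marketFlux (K : ℕ) (ε : ℝ) (V m : ℕ → ℝ → ℝ) (k : ℕ) (t : ℝ) : ℝ :=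
  if k ≤ K then marketLam K ε V m k t * m k t else 0

theorem marketFlux_of_le {K : ℕ} {ε : ℝ} {V m : ℕ → ℝ → ℝ} {k : ℕ} (hk : k ≤ K) (t : ℝ) :
    marketFlux K ε V m k t = marketLam K ε V m k t * m k t :=
  if_pos hk

theorem marketFlux_succ_self (K : ℕ) (ε : ℝ) (V m : ℕ → ℝ → ℝ) (t : ℝ) :
    marketFlux K ε V m (K + 1) t = 0 :=
  if_neg (Nat.lt_irrefl _ ∘ Nat.lt_of_succ_le)

namespace IsHJBKolSolution

variable {K : ℕ} {T r ε : ℝ} {M : ℕ → ℝ} {V m : ℕ → ℝ → ℝ} {k : ℕ} {t : ℝ}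

theorem V_zero (h : IsHJBKolSolution K T r ε M V m) (t : ℝ) : V 0 t = 0 :=
  h.1 t

theorem contDiffOn_V (h : IsHJBKolSolution K T r ε M V m) (hk1 : 1 ≤ k) (hkK : k ≤ K) :
    ContDiffOn ℝ 1 (V k) (Set.Icc 0 T) :=
  h.2.1 k hk1 hkK

theorem contDiffOn_m (h : IsHJBKolSolution K T r ε M V m) (hk : k ≤ K) :
    ContDiffOn ℝ 1 (m k) (Set.Icc 0 T) :=
  h.2.2.1 k hk

theorem V_terminal (h : IsHJBKolSolution K T r ε M V m) (hk1 : 1 ≤ k) (hkK : k ≤ K) :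
    V k T = 0 :=
  h.2.2.2.2.2.2.2.1 k hk1 hkK

theorem m_initial (h : IsHJBKolSolution K T r ε M V m) (hk : k ≤ K) : m k 0 = M k :=
  h.2.2.2.2.2.2.2.2 k hk

theorem hasDerivAt_V (h : IsHJBKolSolution K T r ε M V m) (hk1 : 1 ≤ k) (hkK : k ≤ K)
    (ht : t ∈ Set.Ioo 0 T) : HasDerivAt (V k) (derivWithin (V k) (Set.Icc 0 T) t) t :=
  ((h.contDiffOn_V hk1 hkK).differentiableOn one_ne_zero).hasDerivAt_derivWithin_Icc ht

theorem hasDerivAt_m (h : IsHJBKolSolution K T r ε M V m) (hk : k ≤ K)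
    (ht : t ∈ Set.Ioo 0 T) : HasDerivAt (m k) (derivWithin (m k) (Set.Icc 0 T) t) t :=
  ((h.contDiffOn_m hk).differentiableOn one_ne_zero).hasDerivAt_derivWithin_Icc ht

theorem continuousOn_V (h : IsHJBKolSolution K T r ε M V m) (hk : k ≤ K) :
    ContinuousOn (V k) (Set.Icc 0 T) := by
  rcases Nat.eq_zero_or_pos k with rfl | hk1
  · exact continuousOn_const.congr fun t _ => h.V_zero t
  · exact (h.contDiffOn_V hk1 hk).continuousOn

theorem marketLam_sq (h : IsHJBKolSolution K T r ε M V m) (hk1 : 1 ≤ k) (hkK : k ≤ K)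
    (ht : t ∈ Set.Icc 0 T) :
    marketLam K ε V m k t ^ 2 = r * V k t - derivWithin (V k) (Set.Icc 0 T) t := by
  obtain ⟨-, -, -, hHJB, -⟩ := h
  have := hHJB k hk1 hkK t ht
  unfold marketLam
  linarith

theorem derivWithin_m (h : IsHJBKolSolution K T r ε M V m) (hk1 : 1 ≤ k) (hkK : k ≤ K)
    (ht : t ∈ Set.Icc 0 T) :
    derivWithin (m k) (Set.Icc 0 T) t = marketFlux K ε V m (k + 1) t - marketFlux K ε V m k t := by
  obtain ⟨-, -, -, -, -, hKol, hKolTop, -⟩ := h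
  rw [marketFlux_of_le hkK]
  rcases hkK.eq_or_lt with rfl | hlt
  · rw [marketFlux_succ_self, hKolTop t ht]
    ring
  · rw [marketFlux_of_le hlt]
    exact hKol k hk1 (by omega) t ht

/-- Summing the Kolmogorov equations from the top expresses the flux through derivatives of
the `m_j`, which are continuous even where `2 + ε η` vanishes. -/
theorem marketFlux_eq_neg_sum (h : IsHJBKolSolution K T r ε M V m) (hk1 : 1 ≤ k)
    (hkK : k ≤ K) (ht : t ∈ Set.Icc 0 T) :
    marketFlux K ε V m k t = -∑ j ∈ Icc k K, derivWithin (m j) (Set.Icc 0 T) t := by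
  rw [sum_congr rfl fun j hj => h.derivWithin_m (hk1.trans (mem_Icc.1 hj).1) (mem_Icc.1 hj).2 ht,
    sum_Icc_sub (f := fun j => marketFlux K ε V m j t) hkK, marketFlux_succ_self]
  ring

theorem continuousOn_marketLam_sq (hT : 0 < T) (h : IsHJBKolSolution K T r ε M V m)
    (hk1 : 1 ≤ k) (hkK : k ≤ K) :
    ContinuousOn (fun t => marketLam K ε V m k t ^ 2) (Set.Icc 0 T) := by
  have hV := h.contDiffOn_V hk1 hkK
  refine (((continuousOn_const (c := r)).mul hV.continuousOn).sub
    (hV.continuousOn_derivWithin (uniqueDiffOn_Icc hT) le_rfl)).congr fun t ht => ?_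
  exact h.marketLam_sq hk1 hkK ht

theorem continuousOn_marketLam_mul (hT : 0 < T) (h : IsHJBKolSolution K T r ε M V m)
    (hk1 : 1 ≤ k) (hkK : k ≤ K) :
    ContinuousOn (fun t => marketLam K ε V m k t * m k t) (Set.Icc 0 T) := by
  refine (continuousOn_finsetSum (Icc k K) fun j hj =>
    (h.contDiffOn_m (mem_Icc.1 hj).2).continuousOn_derivWithin (uniqueDiffOn_Icc hT) le_rfl).neg
    |>.congr fun t ht => ?_
  rw [← marketFlux_of_le hkK, h.marketFlux_eq_neg_sum hk1 hkK ht]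
  rfl

end IsHJBKolSolution

def discountedPairing (K : ℕ) (r : ℝ) (V₁ m₁ V₂ m₂ : ℕ → ℝ → ℝ) (t : ℝ) : ℝ :=
  Real.exp (-(r * t)) * ∑ k ∈ Icc 1 K, (V₂ k t - V₁ k t) * (m₂ k t - m₁ k t)

def energyDensity (K : ℕ) (r ε : ℝ) (V₁ m₁ V₂ m₂ : ℕ → ℝ → ℝ) (t : ℝ) : ℝ :=
  Real.exp (-(r * t)) *
    ∑ k ∈ Icc 1 K,
      ((m₂ k t - m₁ k t) * ((marketLam K ε V₂ m₂ k t) ^ 2 - (marketLam K ε V₁ m₁ k t) ^ 2) +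
        ((V₂ k t - V₂ (k - 1) t) - (V₁ k t - V₁ (k - 1) t)) *
          (marketLam K ε V₂ m₂ k t * m₂ k t - marketLam K ε V₁ m₁ k t * m₁ k t))

section TwoSolutions

variable {K : ℕ} {T r ε : ℝ} {M : ℕ → ℝ} {V₁ m₁ V₂ m₂ : ℕ → ℝ → ℝ}

theorem discountedPairing_zero (h₁ : IsHJBKolSolution K T r ε M V₁ m₁)
    (h₂ : IsHJBKolSolution K T r ε M V₂ m₂) : discountedPairing K r V₁ m₁ V₂ m₂ 0 = 0 := by
  refine mul_eq_zero_of_right _ (sum_eq_zero fun k hk => ?_)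
  rw [h₁.m_initial (mem_Icc.1 hk).2, h₂.m_initial (mem_Icc.1 hk).2, sub_self, mul_zero]

theorem discountedPairing_terminal (h₁ : IsHJBKolSolution K T r ε M V₁ m₁)
    (h₂ : IsHJBKolSolution K T r ε M V₂ m₂) : discountedPairing K r V₁ m₁ V₂ m₂ T = 0 := by
  refine mul_eq_zero_of_right _ (sum_eq_zero fun k hk => ?_)
  obtain ⟨hk1, hkK⟩ := mem_Icc.1 hk
  rw [h₁.V_terminal hk1 hkK, h₂.V_terminal hk1 hkK, sub_self, zero_mul]

theorem continuousOn_discountedPairing (h₁ : IsHJBKolSolution K T r ε M V₁ m₁)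
    (h₂ : IsHJBKolSolution K T r ε M V₂ m₂) :
    ContinuousOn (discountedPairing K r V₁ m₁ V₂ m₂) (Set.Icc 0 T) := by
  refine (Real.continuous_exp.comp (continuous_const.mul continuous_id).neg).continuousOn.mul
    (continuousOn_finsetSum _ fun k hk => ?_)
  obtain ⟨hk1, hkK⟩ := mem_Icc.1 hk
  exact ((h₂.continuousOn_V hkK).sub (h₁.continuousOn_V hkK)).mul
    ((h₂.contDiffOn_m hkK).continuousOn.sub (h₁.contDiffOn_m hkK).continuousOn)

theorem continuousOn_energyDensity (hT : 0 < T) (h₁ : IsHJBKolSolution K T r ε M V₁ m₁)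
    (h₂ : IsHJBKolSolution K T r ε M V₂ m₂) :
    ContinuousOn (energyDensity K r ε V₁ m₁ V₂ m₂) (Set.Icc 0 T) := by
  refine (Real.continuous_exp.comp (continuous_const.mul continuous_id).neg).continuousOn.mul
    (continuousOn_finsetSum _ fun k hk => ?_)
  obtain ⟨hk1, hkK⟩ := mem_Icc.1 hk
  have hk' : k - 1 ≤ K := by omega
  exact (((h₂.contDiffOn_m hkK).continuousOn.sub (h₁.contDiffOn_m hkK).continuousOn).mul
      ((h₂.continuousOn_marketLam_sq hT hk1 hkK).sub (h₁.continuousOn_marketLam_sq hT hk1 hkK))).add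
    ((((h₂.continuousOn_V hkK).sub (h₂.continuousOn_V hk')).sub
      ((h₁.continuousOn_V hkK).sub (h₁.continuousOn_V hk'))).mul
      ((h₂.continuousOn_marketLam_mul hT hk1 hkK).sub (h₁.continuousOn_marketLam_mul hT hk1 hkK)))

theorem hasDerivAt_discountedPairing (h₁ : IsHJBKolSolution K T r ε M V₁ m₁)
    (h₂ : IsHJBKolSolution K T r ε M V₂ m₂) {t : ℝ} (ht : t ∈ Set.Ioo 0 T) :
    HasDerivAt (discountedPairing K r V₁ m₁ V₂ m₂) (-energyDensity K r ε V₁ m₁ V₂ m₂ t) t := by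
  have htIcc := Set.Ioo_subset_Icc_self ht
  have hderiv := hasDerivAt_exp_mul_sum_mul (s := Icc 1 K) (r := r)
    (fun k hk => (h₂.hasDerivAt_V (mem_Icc.1 hk).1 (mem_Icc.1 hk).2 ht).fun_sub
      (h₁.hasDerivAt_V (mem_Icc.1 hk).1 (mem_Icc.1 hk).2 ht))
    (fun k hk => (h₂.hasDerivAt_m (mem_Icc.1 hk).2 ht).fun_sub
      (h₁.hasDerivAt_m (mem_Icc.1 hk).2 ht))
  have hdV : ∀ k ∈ Icc 1 K,
      derivWithin (V₂ k) (Set.Icc 0 T) t - derivWithin (V₁ k) (Set.Icc 0 T) t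
        = r * (V₂ k t - V₁ k t) - (marketLam K ε V₂ m₂ k t ^ 2 - marketLam K ε V₁ m₁ k t ^ 2) := by
    intro k hk
    obtain ⟨hk1, hkK⟩ := mem_Icc.1 hk
    rw [h₂.marketLam_sq hk1 hkK htIcc, h₁.marketLam_sq hk1 hkK htIcc]
    ring
  have hdm : ∀ k ∈ Icc 1 K,
      derivWithin (m₂ k) (Set.Icc 0 T) t - derivWithin (m₁ k) (Set.Icc 0 T) t
        = (marketFlux K ε V₂ m₂ (k + 1) t - marketFlux K ε V₁ m₁ (k + 1) t)
          - (marketFlux K ε V₂ m₂ k t - marketFlux K ε V₁ m₁ k t) := by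
    intro k hk
    obtain ⟨hk1, hkK⟩ := mem_Icc.1 hk
    rw [h₂.derivWithin_m hk1 hkK htIcc, h₁.derivWithin_m hk1 hkK htIcc]
    ring
  refine hderiv.congr_deriv ?_
  rw [sum_pairing_deriv_eq_neg_energy K r
    (Q := fun k => marketFlux K ε V₂ m₂ k t - marketFlux K ε V₁ m₁ k t)
    (by simp only [h₁.V_zero, h₂.V_zero, sub_self])
    (by simp only [marketFlux_succ_self, sub_self]) hdV hdm, energyDensity, mul_neg]
  congr 2
  refine sum_congr rfl fun k hk => ?_
  rw [marketFlux_of_le (mem_Icc.1 hk).2, marketFlux_of_le (mem_Icc.1 hk).2]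
  ring

end TwoSolutions

theorem energy_identity_general
    (K : ℕ) (T r ε : ℝ) (hT : 0 < T)
    (M : ℕ → ℝ)
    (V₁ m₁ V₂ m₂ : ℕ → ℝ → ℝ)
    (h1 : IsHJBKolSolution K T r ε M V₁ m₁)
    (h2 : IsHJBKolSolution K T r ε M V₂ m₂) :
    ∫ t in (0:ℝ)..T, Real.exp (-(r * t)) *
      ∑ k ∈ Finset.Icc 1 K,
        ((m₂ k t - m₁ k t) *
            ((marketLam K ε V₂ m₂ k t) ^ 2 - (marketLam K ε V₁ m₁ k t) ^ 2) +
          ((V₂ k t - V₂ (k - 1) t) - (V₁ k t - V₁ (k - 1) t)) *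
            (marketLam K ε V₂ m₂ k t * m₂ k t - marketLam K ε V₁ m₁ k t * m₁ k t)) = 0 := by
  have hFTC := intervalIntegral.integral_eq_sub_of_hasDerivAt_of_le hT.le
    (continuousOn_discountedPairing h1 h2) (fun t ht => hasDerivAt_discountedPairing h1 h2 ht)
    ((continuousOn_energyDensity hT h1 h2).neg.intervalIntegrable_of_Icc hT.le)
  rwa [discountedPairing_terminal h1 h2, discountedPairing_zero h1 h2, sub_zero,
    intervalIntegral.integral_neg, neg_eq_zero] at hFTC

/-- **Energy identity.** For two solutions of the HJB–Kolmogorov system with the same data,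
writing `G_k = ½(1 − ΔV_k + εφ)`, `H_k = G_k²` and `δL = L⁽²⁾ − L⁽¹⁾`, one has
`∫₀ᵀ e^{−rt} ∑_{k=1}^K [δm_k·δH_k + δ(ΔV_k)·δ(G_k m_k)] dt = 0`. -/
theorem energy_identity
    (K : ℕ) (hK : 1 ≤ K) (T r ε : ℝ) (hT : 0 < T) (hr : 0 < r) (hε : 0 ≤ ε)
    (M : ℕ → ℝ) (hM : ∀ k, k ≤ K → 0 ≤ M k)
    (hMsum : ∑ k ∈ Finset.Icc 0 K, M k = 1)
    (V₁ m₁ V₂ m₂ : ℕ → ℝ → ℝ)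
    (h1 : IsHJBKolSolution K T r ε M V₁ m₁)
    (h2 : IsHJBKolSolution K T r ε M V₂ m₂) :
    ∫ t in (0:ℝ)..T, Real.exp (-(r * t)) *
      ∑ k ∈ Finset.Icc 1 K,
        ((m₂ k t - m₁ k t) *
            ((marketLam K ε V₂ m₂ k t) ^ 2 - (marketLam K ε V₁ m₁ k t) ^ 2) +
          ((V₂ k t - V₂ (k - 1) t) - (V₁ k t - V₁ (k - 1) t)) *
            (marketLam K ε V₂ m₂ k t * m₂ k t - marketLam K ε V₁ m₁ k t * m₁ k t)) = 0 :=
  energy_identity_general K T r ε hT M V₁ m₁ V₂ m₂ h1 h2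
end
end
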